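/- arXiv:1611.02880 — 2 statements merged into one kernel-verified Lean document; each statement's English description precedes it below -/
import Mathlib

section
/- Let k, M, β be integers with 1 ≤ k ≤ M, β ≥ k, and β - k even. Let τ_{k-1}, τ_k, ..., τ_β be real numbers in [0,1] satisfying τ_{k+2t-1} ≤ τ_{k+2t} and τ_{k+2t} ≥ τ_{k+2t+1} for all integers t ≥ 0 (whenever the indices involved lie in {k-1, ..., β}). Then Σ_{h=k}^{β} (-1)^{h-k} · C(h-1, k-1) · C(M, h) · τ_h ≥ τ_{k-1}. -/
/-!
Put `c = k - 1`, `a_i = (-1)^i C(c+i, c) C(M, c+1+i)` and `B_d = a_0 + ⋯ + a_d`. Pascal's rule in `M`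
and the partial alternating row sums `∑_{i ≤ d} (-1)^i C(n+1, i) = (-1)^d C(n, d)` give
`(-1)^d (B_d - 1) = ∑_{c < N < M} C(N, c) C(N-c-1, d) ≥ 0`, so `B_d ≥ 1` for even `d` and `B_d ≤ 1`
for odd `d`. Summation by parts yields `∑_{i ≤ d} a_i τ_{k+i} ≥ τ_k + (B_d - 1) τ_{k+d}` as soon as
every `(B_i - 1)(τ_{k+i} - τ_{k+i+1})` is nonnegative, which is what the zigzag hypotheses on `τ`
guarantee. For `d = β - k` even the last term is nonnegative, and `τ_k ≥ τ_{k-1}`.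
-/

open Finset

theorem sum_range_neg_one_pow_mul_choose_mul_choose {c N : ℕ} (hcN : c < N) (d : ℕ) :
    ∑ i ∈ range (d + 1), (-1 : ℤ) ^ i * ((c + i).choose c * N.choose (c + i)) =
      (-1) ^ d * (N.choose c * (N - c - 1).choose d) := by
  obtain ⟨n, rfl⟩ : ∃ n, N = c + (n + 1) := ⟨N - c - 1, by omega⟩
  have hterm : ∀ i, ((c + i).choose c * (c + (n + 1)).choose (c + i) : ℤ) =
      (c + (n + 1)).choose c * (n + 1).choose i := by
    intro i
    have := Nat.choose_mul (n := c + (n + 1)) (k := c + i) (s := c) (by omega)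
    simp only [Nat.add_sub_cancel_left] at this
    rw [mul_comm]
    exact_mod_cast this
  simp only [hterm, mul_left_comm _ ((c + (n + 1)).choose c : ℤ), ← mul_sum,
    Int.alternating_sum_range_choose_eq_choose]
  rw [show c + (n + 1) - c - 1 = n by omega]

theorem neg_one_pow_mul_sum_range_sub_one {c M : ℕ} (hcM : c < M) (d : ℕ) :
    (-1) ^ d * (∑ i ∈ range (d + 1), (-1 : ℤ) ^ i * ((c + i).choose c * M.choose (c + 1 + i)) - 1) =
      ∑ N ∈ Ico (c + 1) M, (N.choose c * (N - c - 1).choose d : ℤ) := by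
  induction M, hcM using Nat.le_induction with
  | base =>
    rw [sum_range_succ', Ico_self, sum_eq_zero fun i _ => by
      rw [Nat.choose_eq_zero_of_lt (by omega : c + 1 < c + 1 + (i + 1))]; simp]
    simp
  | succ M hcM ih =>
    have hpascal : ∀ i, (M + 1).choose (c + 1 + i) = M.choose (c + i) + M.choose (c + 1 + i) := by
      intro i
      rw [show c + 1 + i = c + i + 1 by omega, Nat.choose_succ_succ]
    simp only [hpascal, Nat.cast_add, mul_add, sum_add_distrib,
      sum_range_neg_one_pow_mul_choose_mul_choose hcM, sum_Ico_succ_top (by omega : c + 1 ≤ M), ← ih]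
    have hsq : ((-1 : ℤ) ^ d) * (-1) ^ d = 1 := by rw [← mul_pow]; norm_num
    linear_combination (M.choose c * (M - c - 1).choose d : ℤ) * hsq

theorem neg_one_pow_mul_sum_range_sub_one_nonneg {c M : ℕ} (hcM : c < M) (d : ℕ) :
    0 ≤ (-1) ^ d *
      (∑ i ∈ range (d + 1), (-1 : ℤ) ^ i * ((c + i).choose c * M.choose (c + 1 + i)) - 1) := by
  rw [neg_one_pow_mul_sum_range_sub_one hcM]
  positivity

section SummationByParts

variable {R : Type*} [CommRing R] [LinearOrder R] [IsStrictOrderedRing R]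

theorem add_sum_range_sub_one_mul_le (a x : ℕ → R) (d : ℕ)
    (h : ∀ i < d, 0 ≤ (∑ j ∈ range (i + 1), a j - 1) * (x i - x (i + 1))) :
    x 0 + (∑ j ∈ range (d + 1), a j - 1) * x d ≤ ∑ j ∈ range (d + 1), a j * x j := by
  induction d with
  | zero => simp only [zero_add, sum_range_one]; linarith
  | succ d ih =>
    have hd := ih fun i hi => h i (by omega)
    have hstep := h d (by omega)
    rw [sum_range_succ a (d + 1), sum_range_succ (fun j => a j * x j) (d + 1)]
    linarith

theorem mul_nonneg_of_neg_one_pow_mul_nonneg {u v : R} (i : ℕ)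
    (hu : 0 ≤ (-1) ^ i * u) (hv : 0 ≤ (-1) ^ i * v) : 0 ≤ u * v := by
  have hsq : ((-1 : R) ^ i) * (-1) ^ i = 1 := by rw [← mul_pow]; simp
  calc (0 : R) ≤ ((-1) ^ i * u) * ((-1) ^ i * v) := mul_nonneg hu hv
    _ = u * v := by linear_combination (u * v) * hsq

end SummationByParts

theorem le_sum_range_mul_of_zigzag {c M D : ℕ} (hcM : c < M) (hD : Even D) (x : ℕ → ℝ)
    (hx : ∀ i < D, 0 ≤ (-1) ^ i * (x i - x (i + 1))) (hxD : 0 ≤ x D) :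
    x 0 ≤ ∑ i ∈ range (D + 1),
      (-1) ^ i * ((c + i).choose c * M.choose (c + 1 + i) : ℝ) * x i := by
  set a : ℕ → ℝ := fun i => (-1) ^ i * ((c + i).choose c * M.choose (c + 1 + i))
  have hpartial (d : ℕ) : 0 ≤ (-1) ^ d * (∑ i ∈ range (d + 1), a i - 1) := by
    have : (0 : ℝ) ≤ _ := Int.cast_nonneg <| neg_one_pow_mul_sum_range_sub_one_nonneg hcM d
    push_cast at this
    exact this
  have habel := add_sum_range_sub_one_mul_le a x D fun i hi =>
    mul_nonneg_of_neg_one_pow_mul_nonneg i (hpartial i) (hx i hi)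
  have hfull : 0 ≤ ∑ i ∈ range (D + 1), a i - 1 := by simpa [hD.neg_one_pow] using hpartial D
  nlinarith [mul_nonneg hfull hxD]

theorem schmidt_sieve_lower (k M β : ℕ) (τ : ℕ → ℝ)
    (hk : 1 ≤ k) (hkM : k ≤ M) (hkβ : k ≤ β) (heven : Even (β - k))
    (hrange : ∀ h, k - 1 ≤ h → h ≤ β → τ h ∈ Set.Icc (0 : ℝ) 1)
    (hup : ∀ t : ℕ, k + 2 * t ≤ β → τ (k + 2 * t - 1) ≤ τ (k + 2 * t))
    (hdown : ∀ t : ℕ, k + 2 * t + 1 ≤ β → τ (k + 2 * t + 1) ≤ τ (k + 2 * t)) :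
    τ (k - 1) ≤ ∑ h ∈ Finset.Icc k β,
      (-1 : ℝ) ^ (h - k) * ((h - 1).choose (k - 1)) * (M.choose h) * τ h := by
  obtain ⟨c, rfl⟩ : ∃ c, k = c + 1 := ⟨k - 1, by omega⟩
  obtain ⟨D, rfl⟩ : ∃ D, β = c + 1 + D := ⟨β - (c + 1), by omega⟩
  simp only [Nat.add_sub_cancel, Nat.add_sub_cancel_left] at *
  have hzigzag (i : ℕ) (hi : i < D) : 0 ≤ (-1) ^ i * (τ (c + 1 + i) - τ (c + 1 + (i + 1))) := by
    rcases Nat.even_or_odd i with ⟨t, rfl⟩ | ⟨t, rfl⟩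
    · have := hdown t (by omega)
      simp only [← two_mul, (even_two_mul t).neg_one_pow, ← add_assoc]
      linarith
    · have := hup (t + 1) (by omega)
      rw [show c + 1 + 2 * (t + 1) - 1 = c + 1 + (2 * t + 1) by omega,
        show c + 1 + 2 * (t + 1) = c + 1 + (2 * t + 1 + 1) by omega] at this
      simp only [(odd_two_mul_add_one t).neg_one_pow]
      linarith
  have hreindex : ∑ h ∈ Icc (c + 1) (c + 1 + D),
      (-1 : ℝ) ^ (h - (c + 1)) * ((h - 1).choose c) * (M.choose h) * τ h =
        ∑ i ∈ range (D + 1),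
          (-1) ^ i * ((c + i).choose c * M.choose (c + 1 + i) : ℝ) * τ (c + 1 + i) := by
    rw [← Ico_add_one_right_eq_Icc, sum_Ico_eq_sum_range,
      show c + 1 + D + 1 - (c + 1) = D + 1 by omega]
    refine sum_congr rfl fun i _ => ?_
    simp only [Nat.add_sub_cancel_left, show c + 1 + i - 1 = c + i by omega]
    ring
  rw [hreindex]
  calc τ c ≤ τ (c + 1 + 0) := hup 0 (by omega)
    _ ≤ _ := le_sum_range_mul_of_zigzag (by omega) heven (fun i => τ (c + 1 + i)) hzigzag
      (hrange (c + 1 + D) (by omega) le_rfl).1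
end

section
/- Let P be a finite set of cardinality M ≥ 1. For each i = 1, ..., M let A_i be a collection of i-element subsets of P such that if E ∈ A_i and p ∈ E then E \ {p} ∈ A_{i-1}, and let A'_i be a collection of i-element subsets of P such that if F ∈ A_{i-1} and p ∈ P \ F then F ∪ {p} ∈ A'_i. Define a_i and a'_i by a_i · C(M,i) = |A_i| and a'_i · C(M,i) = |A'_i|. Then for every i with 1 ≤ i < M, one has a_i ≤ a'_{i+1} and a'_i ≥ a_{i+1}. -/
/-!
Double counting of the inclusions `E ⊂ F` between a family of `i`-subsets of `P` and a family
of `(i + 1)`-subsets of `P`: an `i`-set has `M - i` one-point extensions inside `P`, an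
`(i + 1)`-set has `i + 1` one-point deletions. For `a i ≤ a' (i + 1)`, every extension of a set
of `A i` lies in `A' (i + 1)`; for `a (i + 1) ≤ a' i`, every deletion of a set of `A (i + 1)`
lies in `A i ⊆ A' i` (delete a point and put it back). Both count inequalities turn into
inequalities of proportions because `C(M, i) (M - i) = C(M, i + 1) (i + 1)`.
-/

namespace Finset

variable {α : Type*} [DecidableEq α] {P E F : Finset α} {𝒜 ℬ 𝒞 : Finset (Finset α)}
  {i : ℕ}

lemma card_sdiff_le_card_filter_superset (hup : ∀ p ∈ P, p ∉ E → insert p E ∈ ℬ) :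
    #(P \ E) ≤ #{F ∈ ℬ | E ⊆ F} := by
  rw [← card_image_of_injOn ((insert_inj_on E).mono fun p hp ↦ (mem_sdiff.1 hp).2)]
  refine card_le_card fun F hF ↦ ?_
  obtain ⟨p, hp, rfl⟩ := mem_image.1 hF
  obtain ⟨hpP, hpE⟩ := mem_sdiff.1 hp
  exact mem_filter.2 ⟨hup p hpP hpE, subset_insert p E⟩

lemma card_le_card_filter_subset (hdown : ∀ p ∈ E, E.erase p ∈ 𝒜) :
    #E ≤ #{F ∈ 𝒜 | F ⊆ E} := by
  rw [← card_image_of_injOn (erase_injOn E)]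
  refine card_le_card fun F hF ↦ ?_
  obtain ⟨p, hp, rfl⟩ := mem_image.1 hF
  exact mem_filter.2 ⟨hdown p hp, erase_subset p E⟩

lemma card_filter_subset_le (h𝒜 : ∀ E ∈ 𝒜, #E = i) (hF : #F = i + 1) :
    #{E ∈ 𝒜 | E ⊆ F} ≤ i + 1 := by
  calc #{E ∈ 𝒜 | E ⊆ F} ≤ #(F.powersetCard i) := by
        refine card_le_card fun E hE ↦ ?_
        obtain ⟨hE𝒜, hEF⟩ := mem_filter.1 hE
        exact mem_powersetCard.2 ⟨hEF, h𝒜 E hE𝒜⟩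
    _ = i + 1 := by rw [card_powersetCard, hF, Nat.choose_succ_self_right]

lemma card_filter_superset_le (hℬ : ℬ ⊆ P.powersetCard (i + 1)) (hF : #F = i) :
    #{E ∈ ℬ | F ⊆ E} ≤ #(P \ F) := by
  refine (card_le_card (t := (P \ F).image (insert · F)) fun E hE ↦ ?_).trans
    card_image_le
  obtain ⟨hEℬ, hFE⟩ := mem_filter.1 hE
  obtain ⟨hEP, hEcard⟩ := mem_powersetCard.1 (hℬ hEℬ)
  obtain ⟨p, hpF, rfl⟩ := exists_eq_insert_iff.2 ⟨hFE, by rw [hF, hEcard]⟩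
  exact mem_image.2 ⟨p, mem_sdiff.2 ⟨hEP (mem_insert_self p F), hpF⟩, rfl⟩

lemma card_mul_le_card_mul_of_insert_mem (h𝒜 : 𝒜 ⊆ P.powersetCard i)
    (hℬ : ∀ F ∈ ℬ, #F = i + 1)
    (hup : ∀ E ∈ 𝒜, ∀ p ∈ P, p ∉ E → insert p E ∈ ℬ) :
    #𝒜 * (#P - i) ≤ #ℬ * (i + 1) := by
  refine card_mul_le_card_mul (· ⊆ ·) (fun E hE ↦ ?_) fun F hF ↦ ?_
  · obtain ⟨hEP, hEcard⟩ := mem_powersetCard.1 (h𝒜 hE)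
    rw [← hEcard, ← card_sdiff_of_subset hEP]
    exact card_sdiff_le_card_filter_superset (hup E hE)
  · exact card_filter_subset_le (fun E hE ↦ (mem_powersetCard.1 (h𝒜 hE)).2)
      (hℬ F hF)

lemma card_mul_le_card_mul_of_erase_mem (h𝒜 : 𝒜 ⊆ P.powersetCard i)
    (hℬ : ℬ ⊆ P.powersetCard (i + 1))
    (hdown : ∀ E ∈ ℬ, ∀ p ∈ E, E.erase p ∈ 𝒜) :
    #ℬ * (i + 1) ≤ #𝒜 * (#P - i) := by
  refine card_mul_le_card_mul (fun E F ↦ F ⊆ E) (fun E hE ↦ ?_) fun F hF ↦ ?_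
  · rw [← (mem_powersetCard.1 (hℬ hE)).2]
    exact card_le_card_filter_subset (hdown E hE)
  · obtain ⟨hFP, hFcard⟩ := mem_powersetCard.1 (h𝒜 hF)
    rw [← hFcard, ← card_sdiff_of_subset hFP]
    exact card_filter_superset_le hℬ hFcard

lemma subset_of_erase_mem_of_insert_mem (h𝒜 : ∀ E ∈ 𝒜, E ⊆ P ∧ E.Nonempty)
    (hdown : ∀ E ∈ 𝒜, ∀ p ∈ E, E.erase p ∈ 𝒞)
    (hup : ∀ F ∈ 𝒞, ∀ p ∈ P, p ∉ F → insert p F ∈ ℬ) : 𝒜 ⊆ ℬ := by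
  intro E hE
  obtain ⟨hEP, p, hp⟩ := h𝒜 E hE
  simpa [insert_erase hp] using hup _ (hdown E hE p hp) p (hEP hp) (notMem_erase p E)

end Finset

open Finset in
theorem alternating_proportions_step_general {γ : Type*} [DecidableEq γ]
    (P : Finset γ) (M : ℕ) (hPM : P.card = M)
    (A A' : ℕ → Finset (Finset γ))
    (hAsub : ∀ i, i ≤ M → ∀ E ∈ A i, E ⊆ P ∧ E.card = i)
    (hA'sub : ∀ i, i ≤ M → ∀ E ∈ A' i, E ⊆ P ∧ E.card = i)
    (hAdown : ∀ i, 1 ≤ i → i ≤ M → ∀ E ∈ A i, ∀ p ∈ E, E.erase p ∈ A (i - 1))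
    (hA'up : ∀ i, 1 ≤ i → i ≤ M → ∀ F ∈ A (i - 1), ∀ p ∈ P, p ∉ F → insert p F ∈ A' i)
    (a a' : ℕ → ℝ)
    (ha : ∀ i, 1 ≤ i → i ≤ M → a i * (M.choose i) = ((A i).card : ℝ))
    (ha' : ∀ i, 1 ≤ i → i ≤ M → a' i * (M.choose i) = ((A' i).card : ℝ)) :
    ∀ i, 1 ≤ i → i < M → a i ≤ a' (i + 1) ∧ a (i + 1) ≤ a' i := by
  intro i hi hiM
  have hA : ∀ j ≤ M, A j ⊆ P.powersetCard j :=
    fun j hj E hE ↦ mem_powersetCard.2 (hAsub j hj E hE)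
  have hA' : ∀ j ≤ M, A' j ⊆ P.powersetCard j :=
    fun j hj E hE ↦ mem_powersetCard.2 (hA'sub j hj E hE)
  have hAA' : A i ⊆ A' i := by
    refine subset_of_erase_mem_of_insert_mem (fun E hE ↦ ?_) (hAdown i hi hiM.le)
      (hA'up i hi hiM.le)
    obtain ⟨hEP, hEcard⟩ := hAsub i hiM.le E hE
    exact ⟨hEP, card_pos.1 (by omega)⟩
  have up : #(A i) * (M - i) ≤ #(A' (i + 1)) * (i + 1) := hPM ▸
    card_mul_le_card_mul_of_insert_mem (hA i hiM.le)
      (fun F hF ↦ (hA'sub (i + 1) hiM F hF).2) (hA'up (i + 1) (by omega) hiM)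
  have down : #(A (i + 1)) * (i + 1) ≤ #(A' i) * (M - i) := hPM ▸
    card_mul_le_card_mul_of_erase_mem (hA' i hiM.le) (hA (i + 1) hiM)
      fun E hE p hp ↦ hAA' (hAdown (i + 1) (by omega) hiM E hE p hp)
  have hw : (0 : ℝ) < M.choose i * (M - i : ℕ) := by
    have := Nat.choose_pos hiM.le
    have : 0 < M - i := by omega
    positivity
  have hw' : (M.choose (i + 1) : ℝ) * (i + 1 : ℕ) = M.choose i * (M - i : ℕ) := by
    exact_mod_cast Nat.choose_succ_right_eq M i
  constructor
  · refine le_of_mul_le_mul_right ?_ hw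
    calc a i * (M.choose i * (M - i : ℕ)) = #(A i) * (M - i : ℕ) := by
          rw [← ha i hi hiM.le]; ring
      _ ≤ #(A' (i + 1)) * (i + 1 : ℕ) := by exact_mod_cast up
      _ = a' (i + 1) * (M.choose i * (M - i : ℕ)) := by
          rw [← ha' (i + 1) (by omega) hiM, ← hw']; ring
  · refine le_of_mul_le_mul_right ?_ hw
    calc a (i + 1) * (M.choose i * (M - i : ℕ)) = #(A (i + 1)) * (i + 1 : ℕ) := by
          rw [← hw', ← ha (i + 1) (by omega) hiM]; ring
      _ ≤ #(A' i) * (M - i : ℕ) := by exact_mod_cast down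
      _ = a' i * (M.choose i * (M - i : ℕ)) := by rw [← ha' i hi hiM.le]; ring

theorem alternating_proportions_step {γ : Type*} [DecidableEq γ]
    (P : Finset γ) (M : ℕ) (hPM : P.card = M) (hM : 1 ≤ M)
    (A A' : ℕ → Finset (Finset γ))
    (hAsub : ∀ i, i ≤ M → ∀ E ∈ A i, E ⊆ P ∧ E.card = i)
    (hA'sub : ∀ i, i ≤ M → ∀ E ∈ A' i, E ⊆ P ∧ E.card = i)
    (hAdown : ∀ i, 1 ≤ i → i ≤ M → ∀ E ∈ A i, ∀ p ∈ E, E.erase p ∈ A (i - 1))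
    (hA'up : ∀ i, 1 ≤ i → i ≤ M → ∀ F ∈ A (i - 1), ∀ p ∈ P, p ∉ F → insert p F ∈ A' i)
    (a a' : ℕ → ℝ)
    (ha : ∀ i, 1 ≤ i → i ≤ M → a i * (M.choose i) = ((A i).card : ℝ))
    (ha' : ∀ i, 1 ≤ i → i ≤ M → a' i * (M.choose i) = ((A' i).card : ℝ)) :
    ∀ i, 1 ≤ i → i < M → a i ≤ a' (i + 1) ∧ a (i + 1) ≤ a' i :=
  alternating_proportions_step_general P M hPM A A' hAsub hA'sub hAdown hA'up a a' ha ha'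
end
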